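/- Let $\alpha, \beta, R_0 > 0$ and define $h(a,b) = \left[ 1 + \frac{1}{a} - \frac{2(1+b)}{1+b+e^{2(b-a)}(b-1)} \right]^{-1}$. Then as $\varepsilon \to 0^+$, $\frac{\beta}{\alpha}\frac{1}{\sqrt{\alpha+\beta}} h(\varepsilon\sqrt{\alpha+\beta}, R_0\sqrt{\alpha+\beta}) = \frac{\beta}{\alpha}\varepsilon + \frac{\beta}{\alpha R_0}\left[ \frac{1 - R_0\sqrt{\alpha+\beta}\tanh(R_0\sqrt{\alpha+\beta})}{1 - (R_0\sqrt{\alpha+\beta})^{-1}\tanh(R_0\sqrt{\alpha+\beta})} \right] \varepsilon^2 + O(\varepsilon^3).$ -/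

import Mathlib

/-!
With `s = √(α + β)`, `x = ε s` and `b = R₀ s` one has `h(x, b) = (x⁻¹ + ψ x)⁻¹ = x / (1 + x ψ x)`
where `ψ x = 1 - 2(1 + b) / (1 + b + e^{2(b - x)}(b - 1))`. The denominator of `ψ` at `0` equals
`2 eᵇ (b cosh b - sinh b) > 0` (by the mean value theorem, `sinh b < b cosh b`), so `ψ` is
differentiable at `0` and `x / (1 + x ψ x) = x - ψ(0) x² + O(x³)`. Expressed through `tanh b`,
`-b ψ(0)` is exactly the bracket in the second coefficient.
-/

open Filter Asymptotics

noncomputable def hfun (a b : ℝ) : ℝ :=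
  (1 + 1 / a - 2 * (1 + b) / (1 + b + Real.exp (2 * (b - a)) * (b - 1)))⁻¹

open Topology Real

theorem sinh_lt_mul_cosh {x : ℝ} (hx : 0 < x) : sinh x < x * cosh x := by
  obtain ⟨c, hc, hslope⟩ := exists_hasDerivAt_eq_slope sinh cosh hx continuous_sinh.continuousOn
    fun y _ => hasDerivAt_sinh y
  have hcosh : cosh c < cosh x := cosh_lt_cosh.2 (by rw [abs_of_pos hc.1, abs_of_pos hx]; exact hc.2)
  rw [sinh_zero, sub_zero, sub_zero, eq_div_iff hx.ne'] at hslope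
  nlinarith

theorem one_add_add_exp_two_mul_mul_sub_one (b : ℝ) :
    1 + b + exp (2 * b) * (b - 1) = 2 * exp b * (b * cosh b - sinh b) := by
  rw [cosh_eq, sinh_eq, exp_neg, two_mul, exp_add]
  field_simp
  ring

noncomputable def hfunTail (b x : ℝ) : ℝ :=
  1 - 2 * (1 + b) / (1 + b + exp (2 * (b - x)) * (b - 1))

theorem hfun_eq (a b : ℝ) : hfun a b = (a⁻¹ + hfunTail b a)⁻¹ := by
  rw [hfun, hfunTail, one_div]
  ring

theorem hfunTail_zero {b : ℝ} (hb : 0 < b) :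
    hfunTail b 0 = (b * sinh b - cosh b) / (b * cosh b - sinh b) := by
  have hpos : 0 < b * cosh b - sinh b := sub_pos.2 (sinh_lt_mul_cosh hb)
  rw [hfunTail, sub_zero, one_add_add_exp_two_mul_mul_sub_one]
  field_simp
  have hexp : exp b * exp (-b) = 1 := by rw [← exp_add, add_neg_cancel, exp_zero]
  linear_combination (1 + b) * exp b * cosh_sub_sinh b + (1 + b) * hexp

theorem differentiableAt_hfunTail {b : ℝ} (hb : 0 < b) : DifferentiableAt ℝ (hfunTail b) 0 := by
  have hpos : 0 < b * cosh b - sinh b := sub_pos.2 (sinh_lt_mul_cosh hb)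
  have hN : 1 + b + exp (2 * (b - 0)) * (b - 1) ≠ 0 := by
    rw [sub_zero, one_add_add_exp_two_mul_mul_sub_one]; positivity
  unfold hfunTail
  fun_prop (disch := exact hN)

theorem tanh_ratio_eq {b : ℝ} (hb : 0 < b) :
    (1 - b * tanh b) / (1 - b⁻¹ * tanh b) = -(b * hfunTail b 0) := by
  have hpos : 0 < b * cosh b - sinh b := sub_pos.2 (sinh_lt_mul_cosh hb)
  rw [hfunTail_zero hb, tanh_eq_sinh_div_cosh]
  have := cosh_pos b
  field_simp
  ring

theorem isBigO_inv_inv_add_sub {ψ : ℝ → ℝ} {ψ₀ : ℝ} (hψ : (fun x => ψ x - ψ₀) =O[𝓝 0] fun x => x) :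
    (fun x => (x⁻¹ + ψ x)⁻¹ - (x - ψ₀ * x ^ 2)) =O[𝓝[≠] 0] fun x => x ^ 3 := by
  have hlim : Tendsto ψ (𝓝 0) (𝓝 ψ₀) := by
    have := hψ.trans_tendsto (tendsto_id (x := 𝓝 (0:ℝ)))
    simpa using this.add_const ψ₀
  have hden : Tendsto (fun x => 1 + x * ψ x) (𝓝 0) (𝓝 1) := by
    simpa using tendsto_const_nhds.add (tendsto_id.mul hlim)
  have hnum : (fun x => ψ₀ - ψ x + ψ₀ * ψ x * x) =O[𝓝 0] fun x => x := by
    have h1 : (fun x => ψ₀ - ψ x) =O[𝓝 0] fun x => x := by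
      simpa only [neg_sub] using hψ.neg_left
    have h2 : (fun x => ψ₀ * ψ x * x) =O[𝓝 0] fun x => x := by
      simpa using ((hlim.const_mul ψ₀).isBigO_one ℝ).mul (isBigO_refl (fun x : ℝ => x) _)
    exact h1.add h2
  have hbound : (fun x => x ^ 2 * (ψ₀ - ψ x + ψ₀ * ψ x * x) * (1 + x * ψ x)⁻¹) =O[𝓝 0]
      fun x => x ^ 2 * x * 1 :=
    ((isBigO_refl _ _).mul hnum).mul ((hden.inv₀ one_ne_zero).isBigO_one ℝ)
  refine (hbound.mono nhdsWithin_le_nhds).congr' ?_ (by simp [pow_succ])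
  filter_upwards [self_mem_nhdsWithin,
    (hden.eventually_ne one_ne_zero).filter_mono nhdsWithin_le_nhds] with x hx hD
  have hx : x ≠ 0 := hx
  rw [show x⁻¹ + ψ x = (1 + x * ψ x) / x by field_simp, inv_div]
  field_simp
  ring

theorem stmt_7 (α β R₀ : ℝ) (hα : 0 < α) (hβ : 0 < β) (hR : 0 < R₀) :
    (fun ε : ℝ =>
        β / α * (1 / Real.sqrt (α + β)) *
            hfun (ε * Real.sqrt (α + β)) (R₀ * Real.sqrt (α + β)) -
          (β / α * ε +
            β / (α * R₀) *
              ((1 - R₀ * Real.sqrt (α + β) * Real.tanh (R₀ * Real.sqrt (α + β))) /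
                (1 - (R₀ * Real.sqrt (α + β))⁻¹ * Real.tanh (R₀ * Real.sqrt (α + β)))) *
              ε ^ 2))
      =O[nhdsWithin 0 (Set.Ioi 0)] fun ε : ℝ => ε ^ 3 := by
  set s := √(α + β)
  have hs : 0 < s := sqrt_pos.2 (by linarith)
  have hb : 0 < R₀ * s := mul_pos hR hs
  have hscale : Tendsto (fun ε => ε * s) (𝓝[>] 0) (𝓝[≠] 0) := by
    refine tendsto_nhdsWithin_iff.2 ⟨?_, ?_⟩
    · exact tendsto_nhdsWithin_of_tendsto_nhds (by simpa using (continuous_mul_const s).tendsto 0)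
    · filter_upwards [self_mem_nhdsWithin] with ε hε using (mul_pos hε hs).ne'
  have hexpand := (isBigO_inv_inv_add_sub
    (by simpa using (differentiableAt_hfunTail hb).hasDerivAt.isBigO_sub)).comp_tendsto hscale
  have hcube : (fun ε => (ε * s) ^ 3) =O[𝓝[>] 0] fun ε => ε ^ 3 :=
    (isBigO_const_mul_self (s ^ 3) _ _).congr_left fun ε => by ring
  refine ((hexpand.const_mul_left (β / α / s)).trans hcube).congr_left fun ε => ?_
  simp only [Function.comp_apply, hfun_eq, tanh_ratio_eq hb]
  field_simp
  ring
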